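/- For every 3SAT instance I with at least one clause, the digraph D(I) has directed path-width exactly 1 (and hence, since directed tree-width and DAG-width of D(I) are positive because D(I) is not acyclic and are at most its directed path-width, also directed tree-width 1). -/

import Mathlib

/-- The six vertices of the gadget digraph `H`. -/
inductive GV : Type
  | x1 | y1 | z1 | x2 | y2 | z2
  deriving DecidableEq

instance instFintypeGV : Fintype GV :=
  ⟨{GV.x1, GV.y1, GV.z1, GV.x2, GV.y2, GV.z2}, fun x => by cases x <;> simp⟩

open GV in
/-- The gadget digraph `H` with arcs
x1→y1, y1→z1, z1→x1, x1→x2, y1→y2, z1→z2, x2→z2, z2→y2, y2→x2. -/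
def gadgetH : Digraph GV where
  Adj a b := (a, b) ∈ ([(x1,y1), (y1,z1), (z1,x1), (x1,x2), (y1,y2),
      (z1,z2), (x2,z2), (z2,y2), (y2,x2)] : List (GV × GV))

/-- `l` is a directed path in `D` (a nonrepeating sequence of vertices in which
consecutive vertices are joined by arcs). -/
def Digraph.IsDipath {α : Type} (D : Digraph α) (l : List α) : Prop :=
  l.Chain' D.Adj ∧ l.Nodup

def Digraph.Acyclic {V : Type} (D : Digraph V) : Prop :=
  ∀ v, ¬ Relation.TransGen D.Adj v v

/-- `T` is an out-tree with root `root`: every vertex is reachable from the root,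
the root has in-degree zero, every vertex has at most one in-neighbour, and
there are no directed cycles. -/
def Digraph.IsOutTree {α : Type} (T : Digraph α) (root : α) : Prop :=
  (∀ v, Relation.ReflTransGen T.Adj root v) ∧
  (∀ v, ¬ T.Adj v root) ∧
  (∀ ⦃u u' v⦄, T.Adj u v → T.Adj u' v → u = u') ∧
  (∀ v, ¬ Relation.TransGen T.Adj v v)

/-- `S ⊆ V(D) − Z` is `Z`-normal: every directed walk of `D` that starts and ends
in `S` and leaves `S` must traverse a vertex of `Z`. -/
def Digraph.ZNormal {V : Type} (D : Digraph V) (Z S : Set V) : Prop :=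
  Disjoint S Z ∧
  ∀ (a : V) (l : List V), List.Chain D.Adj a l →
    a ∈ S → (a :: l).getLast (List.cons_ne_nil a l) ∈ S →
    (∃ v ∈ a :: l, v ∉ S) → ∃ v ∈ a :: l, v ∈ Z

/-- An arboreal decomposition of a digraph `D`. -/
structure ArborealDecomp {V : Type} (D : Digraph V) where
  m : ℕ
  R : Digraph (Fin (m + 1))
  root : Fin (m + 1)
  tree : R.IsOutTree root
  X : Fin (m + 1) → Fin (m + 1) → Set V
  W : Fin (m + 1) → Set V
  nonemp : ∀ r, (W r).Nonempty
  cover : ∀ v, ∃ r, v ∈ W r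
  disj : ∀ ⦃r r'⦄, r ≠ r' → Disjoint (W r) (W r')
  normal : ∀ ⦃r' r''⦄, R.Adj r' r'' →
    D.ZNormal (X r' r'') {v | ∃ r, Relation.ReflTransGen R.Adj r'' r ∧ v ∈ W r}

/-- The bag at node `r`: `W_r` together with the sets `X_e` over all arcs `e` incident
with `r`. -/
def ArborealDecomp.bag {V : Type} {D : Digraph V} (d : ArborealDecomp D)
    (r : Fin (d.m + 1)) : Set V :=
  d.W r ∪ {v | ∃ r', (d.R.Adj r r' ∧ v ∈ d.X r r') ∨ (d.R.Adj r' r ∧ v ∈ d.X r' r)}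

noncomputable def dtw {V : Type} (D : Digraph V) : ℕ :=
  sInf {w : ℕ | ∃ d : ArborealDecomp D, ∀ r, (d.bag r).ncard ≤ w + 1}
/-- A directed path decomposition of `D`: a DAG-decomposition whose index digraph is
a directed path (here the path `0 → 1 → ⋯ → n` on `Fin (n+1)`). -/
structure DirPathDecomp {V : Type} (D : Digraph V) where
  n : ℕ
  W : Fin (n + 1) → Set V
  cover : ∀ v, ∃ h, v ∈ W h
  arc : ∀ ⦃u v⦄, D.Adj u v → ∃ h₁ h₂, h₁ ≤ h₂ ∧ u ∈ W h₁ ∧ v ∈ W h₂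
  inter : ∀ ⦃h h' h'' : Fin (n + 1)⦄, h ≤ h' → h' ≤ h'' → W h ∩ W h'' ⊆ W h'

noncomputable def dpw {V : Type} (D : Digraph V) : ℕ :=
  sInf {w : ℕ | ∃ P : DirPathDecomp D, ∀ h, (P.W h).ncard ≤ w + 1}

/-- The vertices of the digraph `D(I)`: the root `r`, a vertex `u i` for each variable
`v^i`, and a copy of the gadget `H` for each clause `C j`. -/
inductive DV (k p : ℕ) : Type
  | r : DV k p
  | u : Fin k → DV k p
  | g : Fin p → GV → DV k p
  deriving DecidableEq, Fintype

/-- The entry vertex of a gadget corresponding to the literal in position `m`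
(positions `0`, `1`, `2` correspond to `x`, `y`, `z`). -/
def fstV : Fin 3 → GV := ![GV.x1, GV.y1, GV.z1]

/-- The exit vertex of a gadget corresponding to the literal in position `m`. -/
def sndV : Fin 3 → GV := ![GV.x2, GV.y2, GV.z2]

/-- A 3SAT instance on variables indexed by `Fin k` is a family of `p` clauses, each an
(ordered) triple of literals; a literal is a variable together with a polarity
(`true` = positive, `false` = negated). -/
abbrev Clauses (k p : ℕ) := Fin p → Fin 3 → Fin k × Bool

/-- The arcs of the digraph `D(I)` associated with the 3SAT instance `C`:
the arcs of each gadget copy `H_j`; the arcs `(r, u_i)`; for each literal `ℓ` of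
variable `v^i`, an arc from `u_i` to the entry vertex of `ℓ` in the first clause
containing `ℓ`, and an arc from the exit vertex of `ℓ` in a clause containing `ℓ`
to the entry vertex of `ℓ` in the next clause containing `ℓ`. -/
inductive DIAdj {k p : ℕ} (C : Clauses k p) : DV k p → DV k p → Prop
  | root (i : Fin k) : DIAdj C .r (.u i)
  | gadget (j : Fin p) {a b : GV} : gadgetH.Adj a b → DIAdj C (.g j a) (.g j b)
  | start (i : Fin k) (b : Bool) (j : Fin p) (m : Fin 3) :
      C j m = (i, b) → (∀ j' : Fin p, j' < j → ∀ m' : Fin 3, C j' m' ≠ (i, b)) →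
      DIAdj C (.u i) (.g j (fstV m))
  | chain (ℓ : Fin k × Bool) (j j' : Fin p) (m m' : Fin 3) :
      C j m = ℓ → C j' m' = ℓ → j < j' →
      (∀ j'' : Fin p, j < j'' → j'' < j' → ∀ m'' : Fin 3, C j'' m'' ≠ ℓ) →
      DIAdj C (.g j (sndV m)) (.g j' (fstV m'))

/-- The digraph `D(I)` associated with the 3SAT instance `C`. -/
def DI {k p : ℕ} (C : Clauses k p) : Digraph (DV k p) := ⟨DIAdj C⟩

/-- The 3SAT instance `C` is satisfiable. -/
def Sat {k p : ℕ} (C : Clauses k p) : Prop :=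
  ∃ a : Fin k → Bool, ∀ j : Fin p, ∃ m : Fin 3, a (C j m).1 = (C j m).2

/-! ### Auxiliary development for `di_width_one` -/

namespace DIProof

open GV

instance : DecidableRel gadgetH.Adj := fun a b =>
  decidable_of_iff ((a, b) ∈ ([(x1,y1), (y1,z1), (z1,x1), (x1,x2), (y1,y2),
      (z1,z2), (x2,z2), (z2,y2), (y2,x2)] : List (GV × GV))) Iff.rfl

/-- Position of a gadget vertex inside a 6-slot block (order x1,y1,z1,x2,z2,y2). -/
def gpos6 : GV → ℕ
  | .x1 => 0 | .y1 => 1 | .z1 => 2 | .x2 => 3 | .z2 => 4 | .y2 => 5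

lemma gpos6_le (c : GV) : gpos6 c ≤ 5 := by cases c <;> simp [gpos6]

lemma gpos6_inj : ∀ c c' : GV, gpos6 c = gpos6 c' → c = c' := by decide

lemma gadget_pos6 : ∀ a b : GV, gadgetH.Adj a b →
    gpos6 a < gpos6 b ∨ (a = .z1 ∧ b = .x1) ∨ (a = .y2 ∧ b = .x2) := by decide

/-- Inverse of `gpos6`. -/
def ginv6 : ℕ → GV
  | 0 => .x1 | 1 => .y1 | 2 => .z1 | 3 => .x2 | 4 => .z2 | _ => .y2

lemma gpos6_ginv6 {t : ℕ} (ht : t < 6) : gpos6 (ginv6 t) = t := by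
  interval_cases t <;> rfl

variable {k p : ℕ}

/-- Linear position of each vertex of `D(I)` (6-slot layout). -/
def dpos6 : DV k p → ℕ
  | .r => 0
  | .u i => 1 + i
  | .g j c => 1 + k + 6 * j + gpos6 c

lemma dpos6_le (v : DV k p) : dpos6 v ≤ k + 6 * p := by
  cases v with
  | r => exact Nat.zero_le _
  | u i => have := i.isLt; simp only [dpos6]; omega
  | g j c => have := j.isLt; have := gpos6_le c; simp only [dpos6]; omega

lemma dpos6_inj {v v' : DV k p} (h : dpos6 v = dpos6 v') : v = v' := by
  cases v with
  | r => cases v' with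
    | r => rfl
    | u i => have := i.isLt; simp only [dpos6] at h; omega
    | g j c => simp only [dpos6] at h; omega
  | u i => cases v' with
    | r => have := i.isLt; simp only [dpos6] at h; omega
    | u i' => simp only [dpos6] at h; exact congrArg DV.u (Fin.ext (by omega))
    | g j c => have := i.isLt; simp only [dpos6] at h; omega
  | g j c => cases v' with
    | r => simp only [dpos6] at h; omega
    | u i => have := i.isLt; simp only [dpos6] at h; omega
    | g j' c' =>
      have h1 := gpos6_le c; have h2 := gpos6_le c'
      simp only [dpos6] at h
      have hj : (j : ℕ) = (j' : ℕ) := by omega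
      have hc : gpos6 c = gpos6 c' := by omega
      rw [Fin.ext hj, gpos6_inj c c' hc]

/-- Classification of arcs of `D(I)` w.r.t. the 6-slot positions: all arcs go
forward except the two intra-gadget back arcs `z1→x1` and `y2→x2`. -/
lemma arc6 {C : Clauses k p} {a b : DV k p} (h : DIAdj C a b) :
    dpos6 a < dpos6 b ∨ (∃ j, a = .g j .z1 ∧ b = .g j .x1) ∨
      (∃ j, a = .g j .y2 ∧ b = .g j .x2) := by
  cases h with
  | root i => left; simp only [dpos6]; omega
  | @gadget j ga gb hg =>
    rcases gadget_pos6 ga gb hg with h | ⟨rfl, rfl⟩ | ⟨rfl, rfl⟩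
    · left; simp only [dpos6]; omega
    · right; left; exact ⟨j, rfl, rfl⟩
    · right; right; exact ⟨j, rfl, rfl⟩
  | start i bb j m _ _ =>
    left; have := i.isLt; simp only [dpos6]; omega
  | chain l j j' m m' _ _ hlt _ =>
    left
    have h1 := gpos6_le (sndV m)
    have hj : (j : ℕ) < (j' : ℕ) := hlt
    simp only [dpos6]; omega

/-- The directed path on `Fin (m+1)`. -/
def PathR (m : ℕ) : Digraph (Fin (m + 1)) := ⟨fun a b => (b : ℕ) = (a : ℕ) + 1⟩

lemma pathR_adj {m : ℕ} {a b : Fin (m + 1)} (h : (PathR m).Adj a b) :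
    (b : ℕ) = (a : ℕ) + 1 := h

lemma pathR_tg_lt {m : ℕ} {a b : Fin (m + 1)}
    (h : Relation.TransGen (PathR m).Adj a b) : (a : ℕ) < (b : ℕ) := by
  induction h with
  | single h => have := pathR_adj h; omega
  | tail _ h ih => have := pathR_adj h; omega

lemma pathR_rtg_of_le {m : ℕ} {a b : Fin (m + 1)} (h : a ≤ b) :
    Relation.ReflTransGen (PathR m).Adj a b := by
  have key : ∀ d : ℕ, ∀ a b : Fin (m + 1), (b : ℕ) = (a : ℕ) + d →
      Relation.ReflTransGen (PathR m).Adj a b := by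
    intro d
    induction d with
    | zero =>
      intro a b hab
      rw [Fin.ext (by omega : (a : ℕ) = (b : ℕ))]
    | succ d ih =>
      intro a b hab
      have hb := b.isLt
      have ha1 : (a : ℕ) + 1 < m + 1 := by omega
      exact Relation.ReflTransGen.head
        (show ((⟨(a : ℕ) + 1, ha1⟩ : Fin (m+1)) : ℕ) = (a : ℕ) + 1 from rfl)
        (ih ⟨(a : ℕ) + 1, ha1⟩ b (by simp only [Fin.val_mk]; omega))
  have hab : (a : ℕ) ≤ (b : ℕ) := h
  exact key ((b : ℕ) - (a : ℕ)) a b (by omega)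

lemma pathR_rtg_iff {m : ℕ} {a b : Fin (m + 1)} :
    Relation.ReflTransGen (PathR m).Adj a b ↔ a ≤ b := by
  constructor
  · intro h
    rcases Relation.reflTransGen_iff_eq_or_transGen.mp h with rfl | h
    · exact le_refl _
    · exact le_of_lt (pathR_tg_lt h)
  · exact pathR_rtg_of_le

lemma pathR_outTree (m : ℕ) : (PathR m).IsOutTree 0 := by
  refine ⟨fun v => pathR_rtg_of_le (Fin.zero_le v), fun v h => ?_,
    fun u u' v h h' => ?_, fun v h => ?_⟩
  · have : ((0 : Fin (m+1)) : ℕ) = (v : ℕ) + 1 := h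
    simp at this
  · have h1 : (v : ℕ) = (u : ℕ) + 1 := h
    have h2 : (v : ℕ) = (u' : ℕ) + 1 := h'
    exact Fin.ext (by omega)
  · exact absurd (pathR_tg_lt h) (lt_irrefl _)

/-- The guard sets of the arboreal decomposition: the cut just below slot `q` is
guarded by `x1` of gadget `j` if `q` is the slot of `y1` or `z1` of gadget `j`, and
by `x2` of gadget `j` if `q` is the slot of `z2` or `y2` of gadget `j`. -/
def Z6 (q : ℕ) : Set (DV k p) :=
  {v | ∃ j : Fin p,
    (v = .g j .x1 ∧ (q = 1 + k + 6 * j + 1 ∨ q = 1 + k + 6 * j + 2)) ∨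
    (v = .g j .x2 ∧ (q = 1 + k + 6 * j + 4 ∨ q = 1 + k + 6 * j + 5))}

lemma Z6_pos {q : ℕ} {v : DV k p} (h : v ∈ Z6 q) : dpos6 v < q := by
  obtain ⟨j, ⟨rfl, hq⟩ | ⟨rfl, hq⟩⟩ := h <;> simp only [dpos6, gpos6] <;> omega

lemma Z6_pair_subsingleton (q : ℕ) {v v' : DV k p}
    (h : v ∈ Z6 q ∪ Z6 (q + 1)) (h' : v' ∈ Z6 q ∪ Z6 (q + 1)) : v = v' := by
  have get : ∀ w : DV k p, w ∈ Z6 q ∪ Z6 (q+1) → ∃ (j : Fin p) (c : ℕ),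
      (q = 1 + k + 6 * j + c ∨ q + 1 = 1 + k + 6 * j + c) ∧
      (((c = 1 ∨ c = 2) ∧ w = .g j .x1) ∨ ((c = 4 ∨ c = 5) ∧ w = .g j .x2)) := by
    rintro w (⟨j, ⟨rfl, hq | hq⟩ | ⟨rfl, hq | hq⟩⟩ | ⟨j, ⟨rfl, hq | hq⟩ | ⟨rfl, hq | hq⟩⟩)
    · exact ⟨j, 1, Or.inl hq, Or.inl ⟨Or.inl rfl, rfl⟩⟩
    · exact ⟨j, 2, Or.inl hq, Or.inl ⟨Or.inr rfl, rfl⟩⟩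
    · exact ⟨j, 4, Or.inl hq, Or.inr ⟨Or.inl rfl, rfl⟩⟩
    · exact ⟨j, 5, Or.inl hq, Or.inr ⟨Or.inr rfl, rfl⟩⟩
    · exact ⟨j, 1, Or.inr hq, Or.inl ⟨Or.inl rfl, rfl⟩⟩
    · exact ⟨j, 2, Or.inr hq, Or.inl ⟨Or.inr rfl, rfl⟩⟩
    · exact ⟨j, 4, Or.inr hq, Or.inr ⟨Or.inl rfl, rfl⟩⟩
    · exact ⟨j, 5, Or.inr hq, Or.inr ⟨Or.inr rfl, rfl⟩⟩
  obtain ⟨j, c, hqc, hw⟩ := get v h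
  obtain ⟨j', c', hqc', hw'⟩ := get v' h'
  rcases hw with ⟨hc, rfl⟩ | ⟨hc, rfl⟩ <;> rcases hw' with ⟨hc', rfl⟩ | ⟨hc', rfl⟩
  · have : (j : ℕ) = (j' : ℕ) := by omega
    rw [Fin.ext this]
  · exfalso; omega
  · exfalso; omega
  · have : (j : ℕ) = (j' : ℕ) := by omega
    rw [Fin.ext this]

/-- Generic "exit arc" lemma: a walk that starts in `S` and leaves `S` contains an
arc from `S` to its complement. -/
lemma exists_exit {V : Type} (D : Digraph V) (S : Set V) :
    ∀ (l : List V) (a : V), List.Chain D.Adj a l → a ∈ S → (∃ v ∈ a :: l, v ∉ S) →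
    ∃ u v, D.Adj u v ∧ u ∈ S ∧ v ∉ S ∧ v ∈ a :: l := by
  intro l
  induction l with
  | nil =>
    rintro a _ ha ⟨v, hv, hvs⟩
    simp only [List.mem_singleton] at hv; subst hv; exact absurd ha hvs
  | cons b t ih =>
    rintro a hc ha ⟨v, hv, hvs⟩
    rcases List.chain_cons.mp hc with ⟨hab, hct⟩
    by_cases hb : b ∈ S
    · have hv' : v ∈ b :: t := by
        rcases List.mem_cons.mp hv with rfl | h
        · exact absurd ha hvs
        · exact h
      obtain ⟨u, w, h1, h2, h3, h4⟩ := ih b hct hb ⟨v, hv', hvs⟩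
      exact ⟨u, w, h1, h2, h3, List.mem_cons_of_mem _ h4⟩
    · exact ⟨a, b, hab, ha, hb, List.mem_cons_of_mem _ List.mem_cons_self⟩

/-- The width-1 arboreal decomposition of `D(I)`. -/
def arbo (C : Clauses k p) : ArborealDecomp (DI C) where
  m := k + 6 * p
  R := PathR (k + 6 * p)
  root := 0
  tree := pathR_outTree _
  X := fun _ b => Z6 (b : ℕ)
  W := fun r => {v | dpos6 v = (r : ℕ)}
  nonemp := by
    intro r
    have hr := r.isLt
    rcases Nat.eq_zero_or_pos (r : ℕ) with h0 | hpos
    · exact ⟨DV.r, by simp only [Set.mem_setOf_eq, dpos6]; omega⟩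
    by_cases hk : (r : ℕ) ≤ k
    · refine ⟨DV.u ⟨(r : ℕ) - 1, by omega⟩, ?_⟩
      show dpos6 (DV.u (⟨(r : ℕ) - 1, by omega⟩ : Fin k)) = (r : ℕ)
      show 1 + ((r : ℕ) - 1) = (r : ℕ)
      omega
    · have h1 : 1 + k ≤ (r : ℕ) := by omega
      set q := (r : ℕ) - (1 + k) with hq
      have hd : 6 * (q / 6) + q % 6 = q := by omega
      have hm : q % 6 < 6 := by omega
      have hjp : q / 6 < p := by omega
      refine ⟨DV.g ⟨q / 6, hjp⟩ (ginv6 (q % 6)), ?_⟩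
      show 1 + k + 6 * ((⟨q / 6, hjp⟩ : Fin p) : ℕ) + gpos6 (ginv6 (q % 6)) = (r : ℕ)
      rw [gpos6_ginv6 hm]
      show 1 + k + 6 * (q / 6) + q % 6 = (r : ℕ)
      omega
  cover := fun v => ⟨⟨dpos6 v, by have := dpos6_le v; omega⟩, rfl⟩
  disj := by
    intro r r' hne
    rw [Set.disjoint_left]
    intro v hv hv'
    simp only [Set.mem_setOf_eq] at hv hv'
    exact hne (Fin.ext (by omega))
  normal := by
    intro r' r'' hadj
    have hq : (r'' : ℕ) = (r' : ℕ) + 1 := hadj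
    have hS : ∀ v : DV k p,
        (v ∈ {v : DV k p | ∃ rr, Relation.ReflTransGen (PathR (k + 6*p)).Adj r'' rr ∧
          v ∈ {w : DV k p | dpos6 w = (rr : ℕ)}}) ↔ (r'' : ℕ) ≤ dpos6 v := by
      intro v
      constructor
      · rintro ⟨rr, hrtg, hv⟩
        have h1 : (r'' : ℕ) ≤ (rr : ℕ) := pathR_rtg_iff.mp hrtg
        simp only [Set.mem_setOf_eq] at hv
        omega
      · intro hle
        refine ⟨⟨dpos6 v, by have := dpos6_le v; omega⟩,
          pathR_rtg_iff.mpr ?_, rfl⟩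
        show (r'' : ℕ) ≤ dpos6 v
        exact hle
    constructor
    · rw [Set.disjoint_left]
      intro v hv hz
      have h1 := (hS v).mp hv
      have h2 := Z6_pos hz
      omega
    · intro a l hchain ha hlast hex
      obtain ⟨u, v, huv, hu, hvns, hvmem⟩ :=
        exists_exit (DI C) _ l a hchain ha hex
      refine ⟨v, hvmem, ?_⟩
      have hu' : (r'' : ℕ) ≤ dpos6 u := (hS u).mp hu
      have hv' : ¬ (r'' : ℕ) ≤ dpos6 v := fun h => hvns ((hS v).mpr h)
      rcases arc6 huv with hlt | ⟨j, rfl, rfl⟩ | ⟨j, rfl, rfl⟩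
      · exact absurd (by omega : (r'' : ℕ) ≤ dpos6 v) hv'
      · refine ⟨j, Or.inl ⟨rfl, ?_⟩⟩
        simp only [dpos6, gpos6] at hu' hv'
        omega
      · refine ⟨j, Or.inr ⟨rfl, ?_⟩⟩
        simp only [dpos6, gpos6] at hu' hv'
        omega

lemma arbo_bag (C : Clauses k p) (r : Fin ((arbo C).m + 1)) :
    ((arbo C).bag r).ncard ≤ 2 := by
  have hsub : (arbo C).bag r ⊆
      {v : DV k p | dpos6 v = (r : ℕ)} ∪ (Z6 (r : ℕ) ∪ Z6 ((r : ℕ) + 1)) := by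
    rintro v (hv | ⟨r', ⟨hadj, hx⟩ | ⟨hadj, hx⟩⟩)
    · exact Or.inl hv
    · have h1 : (r' : ℕ) = (r : ℕ) + 1 := hadj
      exact Or.inr (Or.inr (h1 ▸ hx))
    · exact Or.inr (Or.inl hx)
  calc ((arbo C).bag r).ncard
      ≤ ({v : DV k p | dpos6 v = (r : ℕ)} ∪ (Z6 (r : ℕ) ∪ Z6 ((r : ℕ) + 1))).ncard :=
        Set.ncard_le_ncard hsub (Set.toFinite _)
    _ ≤ ({v : DV k p | dpos6 v = (r : ℕ)}).ncard +
          (Z6 (r : ℕ) ∪ Z6 ((r : ℕ) + 1) : Set (DV k p)).ncard :=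
        Set.ncard_union_le _ _
    _ ≤ 1 + 1 := by
        gcongr
        · refine (Set.ncard_le_one (Set.toFinite _)).mpr (fun a ha b hb => dpos6_inj ?_)
          simp only [Set.mem_setOf_eq] at ha hb
          omega
        · exact (Set.ncard_le_one (Set.toFinite _)).mpr (fun a ha b hb => Z6_pair_subsingleton _ ha hb)

/-! ### The width-1 directed path decomposition -/

def loOff : GV → ℕ
  | .x1 => 0 | .y1 => 0 | .z1 => 1 | .x2 => 2 | .z2 => 2 | .y2 => 3

def hiOff : GV → ℕ
  | .x1 => 1 | .y1 => 0 | .z1 => 1 | .x2 => 3 | .z2 => 2 | .y2 => 3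

def lo4 : DV k p → ℕ
  | .r => 0
  | .u i => 1 + i
  | .g j c => 1 + k + 4 * j + loOff c

def hi4 : DV k p → ℕ
  | .r => 0
  | .u i => 1 + i
  | .g j c => 1 + k + 4 * j + hiOff c

lemma off_le : ∀ c : GV, loOff c ≤ hiOff c ∧ hiOff c ≤ 3 := by decide

lemma gadget_off : ∀ a b : GV, gadgetH.Adj a b → loOff a ≤ hiOff b := by decide

lemma lo4_le_hi4 (v : DV k p) : lo4 v ≤ hi4 v := by
  cases v with
  | r => exact le_refl _
  | u i => exact le_refl _
  | g j c => have := (off_le c).1; simp only [lo4, hi4]; omega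

lemma hi4_le (v : DV k p) : hi4 v ≤ k + 4 * p := by
  cases v with
  | r => exact Nat.zero_le _
  | u i => have := i.isLt; simp only [hi4]; omega
  | g j c => have := (off_le c).2; have := j.isLt; simp only [hi4]; omega

lemma arc4 {C : Clauses k p} {a b : DV k p} (h : DIAdj C a b) : lo4 a ≤ hi4 b := by
  cases h with
  | root i => exact Nat.zero_le _
  | @gadget j ga gb hg =>
    have := gadget_off ga gb hg
    simp only [lo4, hi4]; omega
  | start i bb j m _ _ =>
    have := i.isLt; simp only [lo4, hi4]; omega
  | chain l j j' m m' _ _ hlt _ =>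
    have h1 := (off_le (sndV m)).2
    have h2 := (off_le (sndV m)).1
    have hj : (j : ℕ) < (j' : ℕ) := hlt
    have h4 : loOff (sndV m) ≤ 3 := le_trans h2 h1
    simp only [lo4, hi4]; omega

/-- The width-1 directed path decomposition of `D(I)`. -/
def dpd (C : Clauses k p) : DirPathDecomp (DI C) where
  n := k + 4 * p
  W := fun h => {v | lo4 v ≤ (h : ℕ) ∧ (h : ℕ) ≤ hi4 v}
  cover := fun v =>
    ⟨⟨lo4 v, by have := lo4_le_hi4 v; have := hi4_le v; omega⟩,
      le_refl _, lo4_le_hi4 v⟩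
  arc := by
    intro u v h
    have key : lo4 u ≤ hi4 v := arc4 h
    exact ⟨⟨lo4 u, by have := lo4_le_hi4 u; have := hi4_le u; omega⟩,
      ⟨hi4 v, by have := hi4_le v; omega⟩, key, ⟨le_refl _, lo4_le_hi4 u⟩,
      ⟨lo4_le_hi4 v, le_refl _⟩⟩
  inter := by
    rintro h h' h'' h1 h2 v ⟨⟨ha, _⟩, ⟨_, hb⟩⟩
    have h1' : (h : ℕ) ≤ (h' : ℕ) := h1
    have h2' : (h' : ℕ) ≤ (h'' : ℕ) := h2
    exact ⟨by omega, by omega⟩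

/-- Each vertex of `D(I)` has one of two "kinds"; within each kind, at most
one vertex occupies any given slot of the 4-slot layout. -/
def kind4 : DV k p → Bool
  | .g _ .y1 => true | .g _ .z1 => true | .g _ .z2 => true | .g _ .y2 => true
  | _ => false

lemma kind4_subsingleton (q : ℕ) (bb : Bool) {v v' : DV k p}
    (hv : lo4 v ≤ q ∧ q ≤ hi4 v ∧ kind4 v = bb)
    (hv' : lo4 v' ≤ q ∧ q ≤ hi4 v' ∧ kind4 v' = bb) : v = v' := by
  obtain ⟨a1, a2, a3⟩ := hv
  obtain ⟨b1, b2, b3⟩ := hv'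
  have hk : kind4 v = kind4 v' := by rw [a3, b3]
  clear a3 b3
  cases v with
  | r => cases v' with
    | r => rfl
    | u i =>
      exfalso; have := i.isLt
      simp only [lo4, hi4] at a1 a2 b1 b2; omega
    | g j c =>
      exfalso; simp only [lo4, hi4] at a1 a2 b1 b2; omega
  | u i => cases v' with
    | r =>
      exfalso; have := i.isLt
      simp only [lo4, hi4] at a1 a2 b1 b2; omega
    | u i' =>
      simp only [lo4, hi4] at a1 a2 b1 b2
      exact congrArg DV.u (Fin.ext (by omega))
    | g j c =>
      exfalso; have := i.isLt
      simp only [lo4, hi4] at a1 a2 b1 b2; omega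
  | g j c => cases v' with
    | r => exfalso; simp only [lo4, hi4] at a1 a2 b1 b2; omega
    | u i =>
      exfalso; have := i.isLt
      simp only [lo4, hi4] at a1 a2 b1 b2; omega
    | g j' c' =>
      cases c <;> cases c' <;>
        simp only [lo4, hi4, loOff, hiOff, kind4] at a1 a2 b1 b2 hk <;>
        first
          | exact absurd hk Bool.false_ne_true
          | exact absurd hk.symm Bool.false_ne_true
          | (exfalso; omega)
          | (have hjj : j = j' := Fin.ext (by omega); rw [hjj])

lemma dpd_bag (C : Clauses k p) (h : Fin ((dpd C).n + 1)) :
    ((dpd C).W h).ncard ≤ 2 := by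
  have hsub : (dpd C).W h ⊆
      {v : DV k p | lo4 v ≤ (h : ℕ) ∧ (h : ℕ) ≤ hi4 v ∧ kind4 v = false} ∪
      {v : DV k p | lo4 v ≤ (h : ℕ) ∧ (h : ℕ) ≤ hi4 v ∧ kind4 v = true} := by
    rintro v ⟨h1, h2⟩
    cases hkv : kind4 v
    · exact Or.inl ⟨h1, h2, hkv⟩
    · exact Or.inr ⟨h1, h2, hkv⟩
  calc ((dpd C).W h).ncard ≤ _ := Set.ncard_le_ncard hsub (Set.toFinite _)
    _ ≤ _ := Set.ncard_union_le _ _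
    _ ≤ 1 + 1 := by
        gcongr
        · exact (Set.ncard_le_one (Set.toFinite _)).mpr
            (fun a ha b hb => kind4_subsingleton (h : ℕ) false ha hb)
        · exact (Set.ncard_le_one (Set.toFinite _)).mpr
            (fun a ha b hb => kind4_subsingleton (h : ℕ) true ha hb)

/-! ### Lower bounds -/

lemma gadget_cycle_adj (C : Clauses k p) (j : Fin p) :
    DIAdj C (.g j .x1) (.g j .y1) ∧ DIAdj C (.g j .y1) (.g j .z1) ∧
    DIAdj C (.g j .z1) (.g j .x1) :=
  ⟨DIAdj.gadget j (by decide), DIAdj.gadget j (by decide), DIAdj.gadget j (by decide)⟩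

/-- No directed path decomposition of `D(I)` has all bags of size at most `1`. -/
lemma dpw_lb (C : Clauses k p) (hp : 1 ≤ p) :
    ¬ ∃ P : DirPathDecomp (DI C), ∀ h, (P.W h).ncard ≤ 1 := by
  rintro ⟨P, hP⟩
  have hmax : ∀ v : DV k p, ∃ b : Fin (P.n + 1), v ∈ P.W b ∧
      ∀ h', v ∈ P.W h' → h' ≤ b := by
    intro v
    obtain ⟨h0, hh0⟩ := P.cover v
    have hfin : ({h | v ∈ P.W h} : Set (Fin (P.n+1))).Finite := Set.toFinite _
    have hne : hfin.toFinset.Nonempty :=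
      ⟨h0, by rw [Set.Finite.mem_toFinset]; exact hh0⟩
    refine ⟨hfin.toFinset.max' hne, ?_, ?_⟩
    · have := hfin.toFinset.max'_mem hne
      rwa [Set.Finite.mem_toFinset] at this
    · intro h' hh'
      exact hfin.toFinset.le_max' h' (by rw [Set.Finite.mem_toFinset]; exact hh')
  have key : ∀ u v : DV k p, (DI C).Adj u v → u ≠ v →
      ∀ bu bv, (u ∈ P.W bu ∧ ∀ h', u ∈ P.W h' → h' ≤ bu) →
        (v ∈ P.W bv ∧ ∀ h', v ∈ P.W h' → h' ≤ bv) → bu < bv := by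
    rintro u v hadj hnuv bu bv ⟨hbu, hbu'⟩ ⟨hbv, hbv'⟩
    by_contra hle
    push_neg at hle
    obtain ⟨h1, h2, h12, hu1, hv2⟩ := P.arc hadj
    have h2bv : h2 ≤ bv := hbv' h2 hv2
    have h2bu : h2 ≤ bu := le_trans h2bv hle
    have hu2 : u ∈ P.W h2 := P.inter h12 h2bu ⟨hu1, hbu⟩
    exact hnuv ((Set.ncard_le_one (Set.toFinite _)).mp (hP h2) u hu2 v hv2)
  have j0 : Fin p := ⟨0, hp⟩
  obtain ⟨hxy, hyz, hzx⟩ := gadget_cycle_adj C j0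
  obtain ⟨bx, hbx⟩ := hmax (.g j0 .x1)
  obtain ⟨by', hby⟩ := hmax (.g j0 .y1)
  obtain ⟨bz, hbz⟩ := hmax (.g j0 .z1)
  have h1 : bx < by' := key _ _ hxy (by simp) bx by' hbx hby
  have h2 : by' < bz := key _ _ hyz (by simp) by' bz hby hbz
  have h3 : bz < bx := key _ _ hzx (by simp) bz bx hbz hbx
  exact absurd (lt_trans (lt_trans h1 h2) h3) (lt_irrefl _)

/-- No arboreal decomposition of `D(I)` has all bags of size at most `1`. -/
lemma dtw_lb (C : Clauses k p) (hp : 1 ≤ p) :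
    ¬ ∃ d : ArborealDecomp (DI C), ∀ r, (d.bag r).ncard ≤ 1 := by
  rintro ⟨d, hd⟩
  obtain ⟨hreach, hroot, huniq, hacyc⟩ := d.tree
  have hbag : ∀ r, ∀ a ∈ d.bag r, ∀ b ∈ d.bag r, a = b :=
    fun r => (Set.ncard_le_one (Set.toFinite _)).mp (hd r)
  have hnadj : ∀ {r r'}, d.R.Adj r r' → r ≠ r' := by
    intro r r' h heq
    exact hacyc r (Relation.TransGen.single (heq ▸ h))
  have hXempty : ∀ {r r'}, d.R.Adj r r' → d.X r r' = ∅ := by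
    intro r r' h
    rw [Set.eq_empty_iff_forall_notMem]
    intro v hv
    obtain ⟨w1, hw1⟩ := d.nonemp r
    obtain ⟨w2, hw2⟩ := d.nonemp r'
    have hv1 : v ∈ d.bag r := Or.inr ⟨r', Or.inl ⟨h, hv⟩⟩
    have hv2 : v ∈ d.bag r' := Or.inr ⟨r, Or.inr ⟨h, hv⟩⟩
    have e1 : v = w1 := hbag r v hv1 w1 (Or.inl hw1)
    have e2 : v = w2 := hbag r' v hv2 w2 (Or.inl hw2)
    exact Set.disjoint_left.mp (d.disj (hnadj h)) (e1 ▸ hw1) (e2 ▸ hw2)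
  have huniqW : ∀ {v : DV k p} {s t}, v ∈ d.W s → v ∈ d.W t → s = t := by
    intro v s t hs ht
    by_contra hne
    exact Set.disjoint_left.mp (d.disj hne) hs ht
  -- main step: a directed 3-cycle A → B → Cc → A in which some vertex M of the
  -- cycle lies outside the descendant set of the node of A yields a contradiction.
  have main : ∀ (n0 : Fin (d.m+1)) (A B Cc M : DV k p) (nM : Fin (d.m+1)),
      A ∈ d.W n0 → M ∈ d.W nM →
      DIAdj C A B → DIAdj C B Cc → DIAdj C Cc A →
      (M = B ∨ M = Cc) →
      ¬ Relation.ReflTransGen d.R.Adj n0 nM → False := by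
    intro n0 A B Cc M nM hA hM hAB hBC hCA hMmem hnr
    rcases (hreach n0).cases_tail with h | ⟨s, _, hs⟩
    · exact hnr (by rw [h]; exact hreach nM)
    · have hnorm := d.normal hs
      have hAS : A ∈ {v : DV k p | ∃ rr, Relation.ReflTransGen d.R.Adj n0 rr ∧
          v ∈ d.W rr} := ⟨n0, Relation.ReflTransGen.refl, hA⟩
      have hMS : M ∉ {v : DV k p | ∃ rr, Relation.ReflTransGen d.R.Adj n0 rr ∧
          v ∈ d.W rr} := by
        rintro ⟨rr, hr, hmem⟩
        exact hnr ((huniqW hmem hM) ▸ hr)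
      have hchain : List.Chain (DI C).Adj A [B, Cc, A] :=
        List.Chain.cons hAB (List.Chain.cons hBC (List.Chain.cons hCA List.Chain.nil))
      obtain ⟨v, hvmem, hvX⟩ := hnorm.2 A [B, Cc, A] hchain hAS hAS
        ⟨M, by rcases hMmem with rfl | rfl <;> simp, hMS⟩
      rw [hXempty hs] at hvX
      exact hvX
  have j0 : Fin p := ⟨0, hp⟩
  obtain ⟨hxy, hyz, hzx⟩ := gadget_cycle_adj C j0
  obtain ⟨nx, hnx⟩ := d.cover (.g j0 .x1)
  obtain ⟨ny, hny⟩ := d.cover (.g j0 .y1)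
  obtain ⟨nz, hnz⟩ := d.cover (.g j0 .z1)
  by_cases hxy' : Relation.ReflTransGen d.R.Adj nx ny
  · by_cases hxz' : Relation.ReflTransGen d.R.Adj nx nz
    · -- both y and z below x: then x is not below y
      have hnexy : nx ≠ ny := by
        intro h
        have : (DV.g j0 GV.x1 : DV k p) = DV.g j0 GV.y1 :=
          hbag nx _ (Or.inl hnx) _ (Or.inl (h ▸ hny))
        simp at this
      have hyx : ¬ Relation.ReflTransGen d.R.Adj ny nx := by
        intro h
        rcases Relation.reflTransGen_iff_eq_or_transGen.mp hxy' with h' | h'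
        · exact hnexy h'.symm
        · rcases Relation.reflTransGen_iff_eq_or_transGen.mp h with h'' | h''
          · exact hnexy h''
          · exact hacyc nx (Relation.TransGen.trans h' h'')
      exact main ny (.g j0 .y1) (.g j0 .z1) (.g j0 .x1) (.g j0 .x1) nx
        hny hnx hyz hzx hxy (Or.inr rfl) hyx
    · exact main nx (.g j0 .x1) (.g j0 .y1) (.g j0 .z1) (.g j0 .z1) nz
        hnx hnz hxy hyz hzx (Or.inr rfl) hxz'
  · exact main nx (.g j0 .x1) (.g j0 .y1) (.g j0 .z1) (.g j0 .y1) ny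
      hnx hny hxy hyz hzx (Or.inl rfl) hxy'

end DIProof

/-- For every 3SAT instance with at least one clause, the digraph `D(I)` has directed
path-width exactly `1` and directed tree-width exactly `1`. -/
theorem di_width_one (k p : ℕ) (hp : 1 ≤ p) (C : Clauses k p) :
    dpw (DI C) = 1 ∧ dtw (DI C) = 1 := by
  constructor
  · have h1 : 1 ∈ {w : ℕ | ∃ P : DirPathDecomp (DI C), ∀ h, (P.W h).ncard ≤ w + 1} :=
      ⟨DIProof.dpd C, fun h => le_trans (DIProof.dpd_bag C h) (by norm_num)⟩
    have h0 : 0 ∉ {w : ℕ | ∃ P : DirPathDecomp (DI C), ∀ h, (P.W h).ncard ≤ w + 1} := by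
      rintro ⟨P, hP⟩
      exact DIProof.dpw_lb C hp ⟨P, fun h => le_trans (hP h) (by norm_num)⟩
    unfold dpw
    refine le_antisymm (Nat.sInf_le h1) ?_
    have hmem := Nat.sInf_mem ⟨1, h1⟩
    rcases Nat.eq_zero_or_pos
      (sInf {w : ℕ | ∃ P : DirPathDecomp (DI C), ∀ h, (P.W h).ncard ≤ w + 1}) with h | h
    · rw [h] at hmem; exact absurd hmem h0
    · exact h
  · have h1 : 1 ∈ {w : ℕ | ∃ d : ArborealDecomp (DI C), ∀ r, (d.bag r).ncard ≤ w + 1} :=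
      ⟨DIProof.arbo C, fun r => le_trans (DIProof.arbo_bag C r) (by norm_num)⟩
    have h0 : 0 ∉ {w : ℕ | ∃ d : ArborealDecomp (DI C), ∀ r, (d.bag r).ncard ≤ w + 1} := by
      rintro ⟨d, hd⟩
      exact DIProof.dtw_lb C hp ⟨d, fun r => le_trans (hd r) (by norm_num)⟩
    unfold dtw
    refine le_antisymm (Nat.sInf_le h1) ?_
    have hmem := Nat.sInf_mem ⟨1, h1⟩
    rcases Nat.eq_zero_or_pos
      (sInf {w : ℕ | ∃ d : ArborealDecomp (DI C), ∀ r, (d.bag r).ncard ≤ w + 1}) with h | h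
    · rw [h] at hmem; exact absurd hmem h0
    · exact h
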